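/- arXiv:2605.00268 — 5 statements merged into one kernel-verified Lean document; each statement's English description precedes it below -/
import Mathlib

section
/- If a game admits an α-potential function Φ (i.e., for every player i and every unilateral deviation, the change in player i's payoff differs from the change in Φ by at most α), then any policy profile π̂ that maximizes Φ up to error ε (Φ(π̂) ≥ sup_π Φ(π) − ε) is an (ε + 2α)-Nash equilibrium: no player can unilaterally improve their payoff by more than ε + 2α. -/
/-- If Φ is an α-potential function for the game (J i), then any
ε-approximate maximizer of Φ is an (ε + 2α)-Nash equilibrium. -/
theorem alpha_potential_maximizer_is_NE
    {ι : Type*} [DecidableEq ι] {S : ι → Type*}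
    (J : ι → (∀ i, S i) → ℝ) (Φ : (∀ i, S i) → ℝ) (α ε : ℝ)
    (hα : 0 ≤ α) (hε : 0 ≤ ε)
    (hpot : ∀ (i : ι) (π : ∀ j, S j) (πi' : S i),
      |(J i (Function.update π i πi') - J i π)
        - (Φ (Function.update π i πi') - Φ π)| ≤ α)
    (πhat : ∀ i, S i)
    (hmax : ∀ π : ∀ i, S i, Φ π ≤ Φ πhat + ε) :
    ∀ (i : ι) (πi' : S i),
      J i (Function.update πhat i πi') ≤ J i πhat + (ε + 2 * α) := by
  intro i πi'
  have h := hpot i πhat πi'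
  have h2 := hmax (Function.update πhat i πi')
  rw [abs_le] at h
  linarith [h.1, h.2]
end

section
/- The softmax map is 2-Lipschitz from (ℝ^n, ‖·‖_∞) to (Δ_n, ‖·‖_1): for any logit vectors θ, θ', ‖softmax(θ) − softmax(θ')‖_1 ≤ 2‖θ − θ'‖_∞. -/
/-!
If `|θ b - θ' b| ≤ M` for every `b`, the two softmax distributions `p, q` satisfy
`e^{-2M} q ≤ p` and `e^{-2M} p ≤ q` coordinatewise. Hence `|p a - q a| ≤ (1 - e^{-2M}) max (p a) (q a)`,
and summing, with `∑ max (p a) (q a) = 1 + ‖p - q‖₁ / 2`, gives `‖p - q‖₁ ≤ 2 tanh M ≤ 2 M`.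
-/

open Finset Real

theorem Real.sinh_le_mul_cosh {x : ℝ} (hx : 0 ≤ x) : sinh x ≤ x * cosh x := by
  let f : ℝ → ℝ := fun s => s * cosh s - sinh s
  have hf : ∀ s, HasDerivAt f (1 * cosh s + s * sinh s - cosh s) s := fun s =>
    ((hasDerivAt_id s).mul (hasDerivAt_cosh s)).sub (hasDerivAt_sinh s)
  have hmono : MonotoneOn f (Set.Ici 0) := by
    refine monotoneOn_of_deriv_nonneg (convex_Ici 0) (fun s _ => (hf s).continuousAt.continuousWithinAt)
      (fun s _ => (hf s).differentiableAt.differentiableWithinAt) fun s hs => ?_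
    rw [interior_Ici, Set.mem_Ioi] at hs
    rw [(hf s).deriv, one_mul, add_sub_cancel_left]
    exact mul_nonneg hs.le (sinh_nonneg_iff.mpr hs.le)
  simpa [f, sub_nonneg] using hmono Set.self_mem_Ici hx hx

theorem Real.tanh_le_self {x : ℝ} (hx : 0 ≤ x) : tanh x ≤ x := by
  rw [tanh_eq_sinh_div_cosh, div_le_iff₀ (cosh_pos x)]
  exact sinh_le_mul_cosh hx

theorem Real.tanh_eq_one_sub_exp_div (x : ℝ) :
    tanh x = (1 - exp (-(2 * x))) / (1 + exp (-(2 * x))) := by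
  have hx : exp (-(2 * x)) = exp (-x) / exp x := by
    rw [← exp_sub]; ring_nf
  rw [tanh_eq_sinh_div_cosh, sinh_eq, cosh_eq, hx]
  field_simp

theorem sum_abs_sub_le_of_mul_le {ι : Type*} [Fintype ι] {p q : ι → ℝ} {c : ℝ}
    (hp : ∑ a, p a = 1) (hq : ∑ a, q a = 1)
    (hpq : ∀ a, c * q a ≤ p a) (hqp : ∀ a, c * p a ≤ q a) :
    (1 + c) * ∑ a, |p a - q a| ≤ 2 * (1 - c) := by
  have hpoint : ∀ a, |p a - q a| ≤ (1 - c) * ((p a + q a + |p a - q a|) / 2) := by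
    intro a
    rcases le_total (q a) (p a) with h | h
    · rw [abs_of_nonneg (sub_nonneg.mpr h)]; linarith [hqp a]
    · rw [abs_of_nonpos (sub_nonpos.mpr h)]; linarith [hpq a]
  have hsum : ∑ a, |p a - q a| ≤ (1 - c) * ((2 + ∑ a, |p a - q a|) / 2) :=
    calc ∑ a, |p a - q a| ≤ ∑ a, (1 - c) * ((p a + q a + |p a - q a|) / 2) :=
          sum_le_sum fun a _ => hpoint a
      _ = (1 - c) * ((2 + ∑ a, |p a - q a|) / 2) := by
          rw [← mul_sum, ← sum_div, sum_add_distrib, sum_add_distrib, hp, hq, one_add_one_eq_two]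
  linarith

section Softmax

variable {ι : Type*} [Fintype ι]

noncomputable def softmax (θ : ι → ℝ) (a : ι) : ℝ := exp (θ a) / ∑ b, exp (θ b)

theorem sum_exp_pos [Nonempty ι] (θ : ι → ℝ) : 0 < ∑ b, exp (θ b) :=
  sum_pos (fun b _ => exp_pos (θ b)) univ_nonempty

theorem sum_softmax [Nonempty ι] (θ : ι → ℝ) : ∑ a, softmax θ a = 1 := by
  simp only [softmax]
  rw [← sum_div, div_self (sum_exp_pos θ).ne']

theorem exp_neg_two_mul_mul_softmax_le {θ θ' : ι → ℝ} {M : ℝ} (h : ∀ b, |θ b - θ' b| ≤ M)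
    (a : ι) : exp (-(2 * M)) * softmax θ' a ≤ softmax θ a := by
  have : Nonempty ι := ⟨a⟩
  have hexp : ∀ x y, |x - y| ≤ M → exp x ≤ exp M * exp y := fun x y hxy => by
    rw [← exp_add]; exact exp_le_exp.mpr (by linarith [le_abs_self (x - y)])
  have hsum : ∑ b, exp (θ b) ≤ exp M * ∑ b, exp (θ' b) := by
    rw [mul_sum]; exact sum_le_sum fun b _ => hexp _ _ (h b)
  rw [softmax, softmax, mul_div_assoc', div_le_div_iff₀ (sum_exp_pos θ') (sum_exp_pos θ)]
  calc exp (-(2 * M)) * exp (θ' a) * ∑ b, exp (θ b)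
      ≤ exp (-(2 * M)) * (exp M * exp (θ a)) * (exp M * ∑ b, exp (θ' b)) := by
        gcongr; exact hexp _ _ ((abs_sub_comm _ _).trans_le (h a))
    _ = exp (-(2 * M) + M + M) * (exp (θ a) * ∑ b, exp (θ' b)) := by
        rw [exp_add, exp_add]; ring
    _ = exp (θ a) * ∑ b, exp (θ' b) := by
        rw [show -(2 * M) + M + M = 0 by ring, exp_zero, one_mul]

theorem sum_abs_softmax_sub_le_two_mul_tanh [Nonempty ι] {θ θ' : ι → ℝ} {M : ℝ}
    (h : ∀ b, |θ b - θ' b| ≤ M) : ∑ a, |softmax θ a - softmax θ' a| ≤ 2 * tanh M := by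
  have h' : ∀ b, |θ' b - θ b| ≤ M := fun b => (abs_sub_comm _ _).trans_le (h b)
  have hdist := sum_abs_sub_le_of_mul_le (sum_softmax θ) (sum_softmax θ')
    (exp_neg_two_mul_mul_softmax_le h) (exp_neg_two_mul_mul_softmax_le h')
  rw [tanh_eq_one_sub_exp_div, mul_div_assoc', le_div_iff₀ (by positivity)]
  linarith

end Softmax

/-- softmax is 2-Lipschitz from (ℝⁿ, ‖·‖_∞) to (Δₙ, ‖·‖₁):
‖softmax θ − softmax θ'‖₁ ≤ 2 ‖θ − θ'‖_∞. -/
theorem softmax_two_lipschitz (n : ℕ) [NeZero n] (θ θ' : Fin n → ℝ) :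
    ∑ a, |Real.exp (θ a) / (∑ b, Real.exp (θ b))
            - Real.exp (θ' a) / (∑ b, Real.exp (θ' b))|
      ≤ 2 * Finset.univ.sup' Finset.univ_nonempty (fun a => |θ a - θ' a|) := by
  set M := Finset.univ.sup' Finset.univ_nonempty (fun a => |θ a - θ' a|)
  have h : ∀ b, |θ b - θ' b| ≤ M := fun b => le_sup' (fun a => |θ a - θ' a|) (mem_univ b)
  have hM : 0 ≤ M := (abs_nonneg _).trans (h 0)
  calc _ = ∑ a, |softmax θ a - softmax θ' a| := rfl
    _ ≤ 2 * tanh M := sum_abs_softmax_sub_le_two_mul_tanh h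
    _ ≤ 2 * M := by gcongr; exact tanh_le_self hM
end

section
/- For probability vectors p, p' on a finite set of size n with all coordinates bounded below by ν > 0, the centered logits θ_a = log p_a − (1/n)∑_b log p_b and θ'_a defined analogously satisfy ‖θ − θ'‖_∞ ≤ (2/ν)‖p − p'‖_1. -/
open Finset

/-! Since `log` is `1/ν`-Lipschitz on `[ν, ∞)`, `|log p_b - log p'_b| ≤ |p_b - p'_b| / ν`.
Centering is `1 + 1/n ≤ 2`-Lipschitz from `ℓ¹` to `ℓ^∞`: a coordinate of a vector and the mean
of its coordinates are each bounded by its `ℓ¹` norm. -/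

theorem Real.log_sub_log_le_sub_div {x y : ℝ} (hx : 0 < x) (hy : 0 < y) :
    Real.log x - Real.log y ≤ (x - y) / y := by
  calc Real.log x - Real.log y = Real.log (x / y) := (Real.log_div hx.ne' hy.ne').symm
    _ ≤ x / y - 1 := Real.log_le_sub_one_of_pos (div_pos hx hy)
    _ = (x - y) / y := by field_simp

theorem Real.log_sub_log_le_abs_sub_div {ν x y : ℝ} (hν : 0 < ν) (hx : ν ≤ x) (hy : ν ≤ y) :
    Real.log x - Real.log y ≤ |x - y| / ν := by
  have hy₀ : 0 < y := hν.trans_le hy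
  calc Real.log x - Real.log y ≤ (x - y) / y := Real.log_sub_log_le_sub_div (hν.trans_le hx) hy₀
    _ ≤ |x - y| / y := div_le_div_of_nonneg_right (le_abs_self _) hy₀.le
    _ ≤ |x - y| / ν := by gcongr

theorem Real.abs_log_sub_log_le {ν x y : ℝ} (hν : 0 < ν) (hx : ν ≤ x) (hy : ν ≤ y) :
    |Real.log x - Real.log y| ≤ |x - y| / ν :=
  abs_sub_le_iff.mpr
    ⟨Real.log_sub_log_le_abs_sub_div hν hx hy,
      abs_sub_comm x y ▸ Real.log_sub_log_le_abs_sub_div hν hy hx⟩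

theorem abs_sub_mean_sub_sub_mean_le {ι : Type*} [Fintype ι] (n : ℕ) (x y : ι → ℝ) (a : ι) :
    |(x a - (1 / n) * ∑ b, x b) - (y a - (1 / n) * ∑ b, y b)| ≤ 2 * ∑ b, |x b - y b| := by
  have h_coord : |x a - y a| ≤ ∑ b, |x b - y b| :=
    single_le_sum (f := fun b => |x b - y b|) (fun b _ => abs_nonneg _) (mem_univ a)
  have h_mean : |(1 / n : ℝ) * ∑ b, (x b - y b)| ≤ ∑ b, |x b - y b| := by
    rw [abs_mul, abs_of_nonneg (by positivity), one_div]
    exact mul_le_of_le_one_left (abs_nonneg _) (Nat.cast_inv_le_one n) |>.trans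
      (abs_sum_le_sum_abs _ _)
  calc |(x a - (1 / n) * ∑ b, x b) - (y a - (1 / n) * ∑ b, y b)|
      = |(x a - y a) - (1 / n : ℝ) * ∑ b, (x b - y b)| := by rw [sum_sub_distrib]; ring_nf
    _ ≤ |x a - y a| + |(1 / n : ℝ) * ∑ b, (x b - y b)| := abs_sub _ _
    _ ≤ 2 * ∑ b, |x b - y b| := by linarith

theorem centered_logits_lipschitz_general (n : ℕ) (ν : ℝ) (hν : 0 < ν)
    (p p' : Fin n → ℝ)
    (hp : ∀ a, ν ≤ p a) (hp' : ∀ a, ν ≤ p' a) :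
    ∀ a : Fin n,
      |(Real.log (p a) - (1 / n) * ∑ b, Real.log (p b))
        - (Real.log (p' a) - (1 / n) * ∑ b, Real.log (p' b))|
      ≤ (2 / ν) * ∑ b, |p b - p' b| := by
  intro a
  calc _ ≤ 2 * ∑ b, |Real.log (p b) - Real.log (p' b)| :=
        abs_sub_mean_sub_sub_mean_le n _ _ a
    _ ≤ 2 * ∑ b, |p b - p' b| / ν := by
        gcongr with b
        exact Real.abs_log_sub_log_le hν (hp b) (hp' b)
    _ = (2 / ν) * ∑ b, |p b - p' b| := by rw [← sum_div]; ring

/-- For probability vectors p, p' on a finite set of size n with all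
coordinates ≥ ν > 0, the centered logits θ_a = log p_a − (1/n)∑_b log p_b satisfy
‖θ − θ'‖_∞ ≤ (2/ν) ‖p − p'‖₁. -/
theorem centered_logits_lipschitz (n : ℕ) [NeZero n] (ν : ℝ) (hν : 0 < ν) (hν1 : ν ≤ 1)
    (p p' : Fin n → ℝ)
    (hp : ∀ a, ν ≤ p a) (hp' : ∀ a, ν ≤ p' a)
    (hpsum : ∑ a, p a = 1) (hp'sum : ∑ a, p' a = 1) :
    ∀ a : Fin n,
      |(Real.log (p a) - (1 / n) * ∑ b, Real.log (p b))
        - (Real.log (p' a) - (1 / n) * ∑ b, Real.log (p' b))|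
      ≤ (2 / ν) * ∑ b, |p b - p' b| :=
  centered_logits_lipschitz_general n ν hν p p' hp hp'
end

section
/- The KL-regularized proximal step is equivalent to the log-linear mirror-descent update: for Q : A → ℝ and η, γ > 0, the maximizer over p ∈ Δ(A) of F(p) = ⟨Q, p⟩ − η^{-1}KL(p‖π_ref) − γ^{-1}KL(p‖π) is given by p*(a) ∝ π_ref(a)^{γ/(η+γ)} π(a)^{η/(η+γ)} exp((ηγ/(η+γ)) Q(a)). -/
open Finset

/-- Gibbs' inequality: nonnegativity of KL divergence on the simplex. -/
lemma kl_nonneg' {A : Type*} [Fintype A] (p q : A → ℝ)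
    (hp : ∀ a, 0 ≤ p a) (hq : ∀ a, 0 < q a)
    (hpsum : ∑ a, p a = 1) (hqsum : ∑ a, q a = 1) :
    0 ≤ ∑ a, p a * Real.log (p a / q a) := by
  have h1 : ∀ a, p a * Real.log (q a / p a) ≤ q a - p a := by
    intro a
    rcases eq_or_lt_of_le (hp a) with h | h
    · simp [← h]; exact (hq a).le
    · have hlog : Real.log (q a / p a) ≤ q a / p a - 1 :=
        Real.log_le_sub_one_of_pos (div_pos (hq a) h)
      calc p a * Real.log (q a / p a) ≤ p a * (q a / p a - 1) := by
            exact mul_le_mul_of_nonneg_left hlog (le_of_lt h)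
        _ = q a - p a := by field_simp
  have h2 : ∑ a, p a * Real.log (q a / p a) ≤ 0 := by
    calc ∑ a, p a * Real.log (q a / p a) ≤ ∑ a, (q a - p a) :=
          Finset.sum_le_sum (fun a _ => h1 a)
      _ = 0 := by rw [Finset.sum_sub_distrib, hpsum, hqsum]; ring
  have h3 : ∑ a, p a * Real.log (p a / q a) = -∑ a, p a * Real.log (q a / p a) := by
    rw [← Finset.sum_neg_distrib]
    apply Finset.sum_congr rfl
    intro a _
    rcases eq_or_lt_of_le (hp a) with h | h
    · simp [← h]
    · rw [Real.log_div (ne_of_gt (hq a)) (ne_of_gt h),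
        Real.log_div (ne_of_gt h) (ne_of_gt (hq a))]
      ring
  linarith

/-- The KL-regularized proximal step is the log-linear mirror-descent
update: the maximizer over Δ(A) of F(p) = ⟨Q, p⟩ − η⁻¹KL(p‖π_ref) − γ⁻¹KL(p‖π) is
p*(a) ∝ π_ref(a)^{γ/(η+γ)} π(a)^{η/(η+γ)} exp((ηγ/(η+γ))Q(a)). -/
theorem prox_step_is_log_linear_update {A : Type*} [Fintype A] [Nonempty A]
    (πref π : A → ℝ) (Q : A → ℝ) (η γ : ℝ) (hη : 0 < η) (hγ : 0 < γ)
    (hπref : ∀ a, 0 < πref a) (hπrefsum : ∑ a, πref a = 1)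
    (hπ : ∀ a, 0 < π a) (hπsum : ∑ a, π a = 1)
    (pstar : A → ℝ)
    (hpstar : ∀ a, pstar a
      = πref a ^ (γ / (η + γ)) * π a ^ (η / (η + γ))
          * Real.exp (η * γ / (η + γ) * Q a)
        / ∑ b, πref b ^ (γ / (η + γ)) * π b ^ (η / (η + γ))
            * Real.exp (η * γ / (η + γ) * Q b)) :
    (∀ a, 0 ≤ pstar a) ∧ (∑ a, pstar a = 1) ∧
    ∀ p : A → ℝ, (∀ a, 0 ≤ p a) → ∑ a, p a = 1 →
      (∑ a, Q a * p a) - η⁻¹ * (∑ a, p a * Real.log (p a / πref a))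
          - γ⁻¹ * (∑ a, p a * Real.log (p a / π a))
      ≤ (∑ a, Q a * pstar a)
          - η⁻¹ * (∑ a, pstar a * Real.log (pstar a / πref a))
          - γ⁻¹ * (∑ a, pstar a * Real.log (pstar a / π a)) := by
  set w : A → ℝ := fun a => πref a ^ (γ / (η + γ)) * π a ^ (η / (η + γ))
      * Real.exp (η * γ / (η + γ) * Q a) with hw
  set Z : ℝ := ∑ b, w b with hZ
  have hηγ : (0 : ℝ) < η + γ := by linarith
  have hwpos : ∀ a, 0 < w a := by
    intro a
    have h1 : 0 < πref a ^ (γ / (η + γ)) := Real.rpow_pos_of_pos (hπref a) _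
    have h2 : 0 < π a ^ (η / (η + γ)) := Real.rpow_pos_of_pos (hπ a) _
    positivity
  have hZpos : 0 < Z := Finset.sum_pos (fun a _ => hwpos a) Finset.univ_nonempty
  have hpstar_pos : ∀ a, 0 < pstar a := by
    intro a; rw [hpstar a]; exact div_pos (hwpos a) hZpos
  have hpstar' : ∀ a, pstar a = w a / Z := fun a => hpstar a
  have hpstar_sum : ∑ a, pstar a = 1 := by
    have h1 : ∑ a, pstar a = ∑ a, w a / Z :=
      Finset.sum_congr rfl (fun a _ => hpstar' a)
    rw [h1, ← Finset.sum_div, ← hZ, div_self (ne_of_gt hZpos)]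
  set c : ℝ := η⁻¹ + γ⁻¹ with hc
  have hcpos : 0 < c := by positivity
  -- log of w
  have hlogw : ∀ a, Real.log (w a)
      = γ / (η + γ) * Real.log (πref a) + η / (η + γ) * Real.log (π a)
        + η * γ / (η + γ) * Q a := by
    intro a
    rw [hw]
    have h1 : 0 < πref a ^ (γ / (η + γ)) := Real.rpow_pos_of_pos (hπref a) _
    have h2 : 0 < π a ^ (η / (η + γ)) := Real.rpow_pos_of_pos (hπ a) _
    rw [Real.log_mul (by positivity) (Real.exp_ne_zero _),
      Real.log_mul (ne_of_gt h1) (ne_of_gt h2),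
      Real.log_rpow (hπref a), Real.log_rpow (hπ a), Real.log_exp]
  -- key identity
  have key : ∀ p : A → ℝ, (∀ a, 0 ≤ p a) → ∑ a, p a = 1 →
      (∑ a, Q a * p a) - η⁻¹ * (∑ a, p a * Real.log (p a / πref a))
          - γ⁻¹ * (∑ a, p a * Real.log (p a / π a))
      = c * Real.log Z - c * ∑ a, p a * Real.log (p a / pstar a) := by
    intro p hp hps
    have term : ∀ a, Q a * p a - η⁻¹ * (p a * Real.log (p a / πref a))
        - γ⁻¹ * (p a * Real.log (p a / π a))
        = c * (p a * Real.log Z) - c * (p a * Real.log (p a / pstar a)) := by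
      intro a
      rcases eq_or_lt_of_le (hp a) with h | h
      · simp [← h]
      · rw [hpstar' a]
        rw [Real.log_div (ne_of_gt h) (ne_of_gt (hπref a)),
          Real.log_div (ne_of_gt h) (ne_of_gt (hπ a)),
          Real.log_div (ne_of_gt h) (ne_of_gt (div_pos (hwpos a) hZpos)),
          Real.log_div (ne_of_gt (hwpos a)) (ne_of_gt hZpos),
          hlogw a, hc]
        field_simp
        ring
    calc (∑ a, Q a * p a) - η⁻¹ * (∑ a, p a * Real.log (p a / πref a))
            - γ⁻¹ * (∑ a, p a * Real.log (p a / π a))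
        = ∑ a, (Q a * p a - η⁻¹ * (p a * Real.log (p a / πref a))
            - γ⁻¹ * (p a * Real.log (p a / π a))) := by
          rw [Finset.sum_sub_distrib, Finset.sum_sub_distrib,
            Finset.mul_sum, Finset.mul_sum]
      _ = ∑ a, (c * (p a * Real.log Z) - c * (p a * Real.log (p a / pstar a))) := by
          exact Finset.sum_congr rfl (fun a _ => term a)
      _ = c * Real.log Z - c * ∑ a, p a * Real.log (p a / pstar a) := by
          rw [Finset.sum_sub_distrib, ← Finset.mul_sum, ← Finset.mul_sum,
            ← Finset.sum_mul, hps]; ring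
  refine ⟨fun a => le_of_lt (hpstar_pos a), hpstar_sum, ?_⟩
  intro p hp hps
  rw [key p hp hps, key pstar (fun a => le_of_lt (hpstar_pos a)) hpstar_sum]
  have h0 : ∑ a, pstar a * Real.log (pstar a / pstar a) = 0 := by
    apply Finset.sum_eq_zero
    intro a _
    rw [div_self (ne_of_gt (hpstar_pos a))]
    simp
  rw [h0]
  have hkl := kl_nonneg' p pstar hp hpstar_pos hps hpstar_sum
  have := mul_nonneg hcpos.le hkl
  linarith
end

section
/- L1 proportionality of log-linear interpolation: let p, q ∈ Δ(A) with all coordinates ≥ ν > 0, let β ∈ (0,1), and let r ∈ Δ(A) be the normalized log-linear interpolation r(a) ∝ p(a)^{1−β} q(a)^{β}. Then ‖p − q‖_1 ≤ (4/(νβ)) ‖p − r‖_1. -/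
open Finset

/-! The log-ratio `log p − log q` plays the role of the logits of `p` relative to `q`. If it stays
within `ρ` of a constant, the softmax estimate gives `‖p − q‖₁ ≤ 2ρ`. For the log-linear
interpolation `r`, `log p − log r = β (log p − log q) + log Z` with normaliser `Z ≤ 1`, so
`r ≥ ν`; since `log` is `ν⁻¹`-Lipschitz on `[ν, ∞)`, the log-ratio of `p` to `q` stays within
`‖p − r‖₁ / (νβ)` of `−log Z / β`. -/

namespace Real

lemma sub_le_mul_log_sub_log {x y : ℝ} (hx : 0 < x) (hy : 0 < y) :
    x - y ≤ x * (log x - log y) := by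
  have h := mul_le_mul_of_nonneg_left (log_le_sub_one_of_pos (div_pos hy hx)) hx.le
  rw [log_div hy.ne' hx.ne', mul_sub_one, mul_div_cancel₀ _ hx.ne'] at h
  linarith

lemma abs_log_sub_log_le_abs_sub_div {ν x y : ℝ} (hν : 0 < ν) (hx : ν ≤ x) (hy : ν ≤ y) :
    |log x - log y| ≤ |x - y| / ν := by
  wlog hyx : y ≤ x generalizing x y
  · rw [abs_sub_comm, abs_sub_comm x]
    exact this hy hx (le_of_not_ge hyx)
  have hlog : 0 ≤ log x - log y := sub_nonneg.2 (log_le_log (hν.trans_le hy) hyx)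
  rw [abs_of_nonneg hlog, abs_of_nonneg (sub_nonneg.2 hyx), le_div_iff₀ hν]
  calc (log x - log y) * ν ≤ (log x - log y) * y := mul_le_mul_of_nonneg_left hy hlog
    _ ≤ x - y := by linarith [sub_le_mul_log_sub_log (hν.trans_le hy) (hν.trans_le hx)]

end Real

open Real

section

variable {A : Type*} [Fintype A]

lemma sum_abs_sub_le_two_mul_of_log_sub_log_le {p q : A → ℝ} {M : ℝ}
    (hp : ∀ a, 0 < p a) (hq : ∀ a, 0 < q a) (hpsum : ∑ a, p a = 1) (hqsum : ∑ a, q a = 1)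
    (hM : ∀ a, log (p a) - log (q a) ≤ M) :
    ∑ a, |p a - q a| ≤ 2 * M := by
  have hpM : ∀ a, p a - q a ≤ p a * M := fun a =>
    (sub_le_mul_log_sub_log (hp a) (hq a)).trans (mul_le_mul_of_nonneg_left (hM a) (hp a).le)
  have hM0 : 0 ≤ M := by
    have h := sum_le_sum (s := univ) fun a _ => hpM a
    rw [sum_sub_distrib, ← sum_mul, hpsum, hqsum] at h
    linarith
  -- `|t| = 2 t⁺ − t`, and the `t`-parts cancel because both vectors have total mass one
  calc ∑ a, |p a - q a| = ∑ a, (2 * (p a - q a)⁺ - (p a - q a)) := by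
        congr! 1 with a
        linarith [posPart_add_negPart (p a - q a), posPart_sub_negPart (p a - q a)]
    _ = 2 * ∑ a, (p a - q a)⁺ := by
        rw [sum_sub_distrib, ← mul_sum, sum_sub_distrib, hpsum, hqsum, sub_self, sub_zero]
    _ ≤ 2 * ∑ a, p a * M := by
        gcongr with a
        exact sup_le (hpM a) (mul_nonneg (hp a).le hM0)
    _ = 2 * M := by rw [← sum_mul, hpsum, one_mul]

lemma sum_abs_sub_le_two_mul_of_abs_log_sub_log_sub_le {p q : A → ℝ} {c ρ : ℝ}
    (hp : ∀ a, 0 < p a) (hq : ∀ a, 0 < q a) (hpsum : ∑ a, p a = 1) (hqsum : ∑ a, q a = 1)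
    (hρ : ∀ a, |log (p a) - log (q a) - c| ≤ ρ) :
    ∑ a, |p a - q a| ≤ 2 * ρ := by
  have hupper := sum_abs_sub_le_two_mul_of_log_sub_log_le hp hq hpsum hqsum (M := c + ρ)
    fun a => by linarith [(abs_le.1 (hρ a)).2]
  have hlower := sum_abs_sub_le_two_mul_of_log_sub_log_le hq hp hqsum hpsum (M := ρ - c)
    fun a => by linarith [(abs_le.1 (hρ a)).1]
  simp_rw [abs_sub_comm (q _)] at hlower
  linarith

noncomputable def logLinearNormalizer (β : ℝ) (p q : A → ℝ) : ℝ :=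
  ∑ b, p b ^ (1 - β) * q b ^ β

noncomputable def logLinearInterpolation (β : ℝ) (p q : A → ℝ) (a : A) : ℝ :=
  p a ^ (1 - β) * q a ^ β / logLinearNormalizer β p q

section LogLinearInterpolation

variable {p q : A → ℝ} {β ν : ℝ}

lemma logLinearNormalizer_pos [Nonempty A] (hp : ∀ a, 0 < p a) (hq : ∀ a, 0 < q a) :
    0 < logLinearNormalizer β p q :=
  sum_pos (fun a _ => mul_pos (rpow_pos_of_pos (hp a) _) (rpow_pos_of_pos (hq a) _))
    univ_nonempty

lemma logLinearNormalizer_le_one (hp : ∀ a, 0 ≤ p a) (hq : ∀ a, 0 ≤ q a)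
    (hpsum : ∑ a, p a = 1) (hqsum : ∑ a, q a = 1) (hβ0 : 0 ≤ β) (hβ1 : β ≤ 1) :
    logLinearNormalizer β p q ≤ 1 :=
  calc logLinearNormalizer β p q ≤ ∑ a, ((1 - β) * p a + β * q a) :=
        sum_le_sum fun a _ => geom_mean_le_arith_mean2_weighted (by linarith) hβ0 (hp a) (hq a)
          (by ring)
    _ = 1 := by rw [sum_add_distrib, ← mul_sum, ← mul_sum, hpsum, hqsum]; ring

lemma le_rpow_one_sub_mul_rpow {x y : ℝ} (hν : 0 ≤ ν) (hx : ν ≤ x) (hy : ν ≤ y)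
    (hβ0 : 0 ≤ β) (hβ1 : β ≤ 1) : ν ≤ x ^ (1 - β) * y ^ β :=
  calc ν = ν ^ (1 - β) * ν ^ β := by
        rw [← rpow_add' hν (by norm_num), sub_add_cancel, rpow_one]
    _ ≤ x ^ (1 - β) * y ^ β :=
        mul_le_mul (rpow_le_rpow hν hx (by linarith)) (rpow_le_rpow hν hy hβ0)
          (rpow_nonneg hν _) (rpow_nonneg (hν.trans hx) _)

lemma le_logLinearInterpolation (hν : 0 < ν) (hp : ∀ a, ν ≤ p a)
    (hq : ∀ a, ν ≤ q a) (hpsum : ∑ a, p a = 1) (hqsum : ∑ a, q a = 1) (hβ0 : 0 ≤ β)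
    (hβ1 : β ≤ 1) (a : A) : ν ≤ logLinearInterpolation β p q a := by
  have : Nonempty A := ⟨a⟩
  have hZ0 := logLinearNormalizer_pos (β := β) (fun a => hν.trans_le (hp a))
    (fun a => hν.trans_le (hq a))
  have hZ1 := logLinearNormalizer_le_one (fun a => hν.le.trans (hp a))
    (fun a => hν.le.trans (hq a)) hpsum hqsum hβ0 hβ1
  rw [logLinearInterpolation, le_div_iff₀ hZ0]
  nlinarith [le_rpow_one_sub_mul_rpow hν.le (hp a) (hq a) hβ0 hβ1]

lemma log_sub_log_logLinearInterpolation (hp : ∀ a, 0 < p a)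
    (hq : ∀ a, 0 < q a) (a : A) :
    log (p a) - log (logLinearInterpolation β p q a)
      = β * (log (p a) - log (q a)) + log (logLinearNormalizer β p q) := by
  have : Nonempty A := ⟨a⟩
  rw [logLinearInterpolation, log_div _ (logLinearNormalizer_pos hp hq).ne',
    log_mul (rpow_pos_of_pos (hp a) _).ne' (rpow_pos_of_pos (hq a) _).ne',
    log_rpow (hp a), log_rpow (hq a)]
  · ring
  · exact (mul_pos (rpow_pos_of_pos (hp a) _) (rpow_pos_of_pos (hq a) _)).ne'

end LogLinearInterpolation

end

theorem log_linear_interpolation_l1_proportionality_general {A : Type*} [Fintype A]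
    (ν β : ℝ) (hν : 0 < ν) (hβ : β ∈ Set.Ioo (0 : ℝ) 1)
    (p q r : A → ℝ)
    (hp : ∀ a, ν ≤ p a) (hq : ∀ a, ν ≤ q a)
    (hpsum : ∑ a, p a = 1) (hqsum : ∑ a, q a = 1)
    (hr : ∀ a, r a = p a ^ (1 - β) * q a ^ β / ∑ b, p b ^ (1 - β) * q b ^ β) :
    ∑ a, |p a - q a| ≤ (4 / (ν * β)) * ∑ a, |p a - r a| := by
  obtain ⟨hβ0, hβ1⟩ := hβ
  obtain rfl : r = logLinearInterpolation β p q := funext hr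
  have hp0 : ∀ a, 0 < p a := fun a => hν.trans_le (hp a)
  have hq0 : ∀ a, 0 < q a := fun a => hν.trans_le (hq a)
  set L := ∑ a, |p a - logLinearInterpolation β p q a|
  have hL : 0 ≤ L := sum_nonneg fun a _ => abs_nonneg _
  have hlogr (a : A) : |log (p a) - log (logLinearInterpolation β p q a)| ≤ L / ν :=
    (abs_log_sub_log_le_abs_sub_div hν (hp a)
      (le_logLinearInterpolation hν hp hq hpsum hqsum hβ0.le hβ1.le a)).trans
      (by gcongr; exact single_le_sum (fun b _ => abs_nonneg (p b - _)) (mem_univ a))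
  have hlogq (a : A) :
      |log (p a) - log (q a) - -log (logLinearNormalizer β p q) / β| ≤ L / (ν * β) := by
    have hcentred : log (p a) - log (q a) - -log (logLinearNormalizer β p q) / β
        = (log (p a) - log (logLinearInterpolation β p q a)) / β := by
      rw [log_sub_log_logLinearInterpolation hp0 hq0]
      field_simp
      ring
    rw [hcentred, abs_div, abs_of_pos hβ0, ← div_div]
    gcongr
    exact hlogr a
  calc ∑ a, |p a - q a| ≤ 2 * (L / (ν * β)) :=
        sum_abs_sub_le_two_mul_of_abs_log_sub_log_sub_le hp0 hq0 hpsum hqsum hlogq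
    _ ≤ 4 / (ν * β) * L := by
        rw [mul_div_assoc', div_mul_eq_mul_div]
        gcongr
        norm_num

/-- L1 proportionality of the log-linear interpolation: for p, q ∈ Δ(A)
with coordinates ≥ ν > 0, β ∈ (0,1), and r ∝ p^{1−β} q^{β} the normalized log-linear
interpolation, ‖p − q‖₁ ≤ (4/(νβ)) ‖p − r‖₁. -/
theorem log_linear_interpolation_l1_proportionality {A : Type*} [Fintype A] [Nonempty A]
    (ν β : ℝ) (hν : 0 < ν) (hβ : β ∈ Set.Ioo (0 : ℝ) 1)
    (p q r : A → ℝ)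
    (hp : ∀ a, ν ≤ p a) (hq : ∀ a, ν ≤ q a)
    (hpsum : ∑ a, p a = 1) (hqsum : ∑ a, q a = 1)
    (hr : ∀ a, r a = p a ^ (1 - β) * q a ^ β / ∑ b, p b ^ (1 - β) * q b ^ β) :
    ∑ a, |p a - q a| ≤ (4 / (ν * β)) * ∑ a, |p a - r a| :=
  log_linear_interpolation_l1_proportionality_general ν β hν hβ p q r hp hq hpsum hqsum hr
end
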